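/- (Generalized Morrey bound from a local commutator-type estimate) Let n ≥ 1, 1 < p < ∞, and let φ₁, φ₂ be positive measurable functions on ℝⁿ × (0,∞). Assume there is a constant C₀, independent of x and r, such that ∫_r^∞ (1 + ln(t/r)) φ₁(x,t) t^{−n/p−1} dt ≤ C₀ φ₂(x,r) r^{−n/p} for all x ∈ ℝⁿ and r > 0. Suppose f ∈ L_p^{loc}(ℝⁿ) and F is a measurable function on ℝⁿ such that, for some constant A ≥ 0, ‖F‖_{L_p(B(x,r))} ≤ A r^{n/p} ∫_{2r}^∞ (1 + ln(t/r)) t^{−n/p−1} ‖f‖_{L_p(B(x,t))} dt holds for every x ∈ ℝⁿ and r > 0. Then sup_{x ∈ ℝⁿ, r > 0} φ₂(x,r)^{−1} ‖F‖_{L_p(B(x,r))} ≤ A C₀ sup_{x ∈ ℝⁿ, r > 0} φ₁(x,r)^{−1} ‖f‖_{L_p(B(x,r))}; in particular, if f belongs to the generalized Morrey space M_{p,φ₁}, then ‖F‖_{M_{p,φ₂}} ≤ A C₀ ‖f‖_{M_{p,φ₁}}. -/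

import Mathlib

open MeasureTheory Metric Set Filter ENNReal Topology

noncomputable section

/-- The local `L_p` norm `‖f‖_{L_p(B(x,t))}`. -/
def LpB (n : ℕ) (p : ℝ) (f : EuclideanSpace ℝ (Fin n) → ℝ)
    (x : EuclideanSpace ℝ (Fin n)) (t : ℝ) : ℝ :=
  (∫ y in ball x t, |f y| ^ p ∂volume) ^ (1 / p)

/-- The generalized Morrey norm `‖g‖_{M_{p,φ}} = sup_{x, r>0} φ(x,r)⁻¹ ‖g‖_{L_p(B(x,r))}`
(as an extended real number). -/
def morreyNorm (n : ℕ) (p : ℝ) (φ : EuclideanSpace ℝ (Fin n) → ℝ → ℝ)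
    (g : EuclideanSpace ℝ (Fin n) → ℝ) : ℝ≥0∞ :=
  ⨆ (x : EuclideanSpace ℝ (Fin n)) (r : ℝ) (_ : 0 < r),
    ENNReal.ofReal ((φ x r)⁻¹ * LpB n p g x r)

/-!
Inside the integral of the local estimate bound `‖f‖_{L_p(B(x,t))} ≤ φ₁(x,t) ‖f‖_{M_{p,φ₁}}`,
enlarge the range of integration from `(2r,∞)` to `(r,∞)` and apply the hypothesis relating
`φ₁` and `φ₂`; the factors `r^{n/p}` and `r^{-n/p}` then cancel.
-/

lemma ENNReal.ofReal_inv_mul_le_iff {a b c : ℝ} {M : ℝ≥0∞} (ha : 0 < a) :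
    ENNReal.ofReal (a⁻¹ * b) ≤ ENNReal.ofReal c * M ↔
      ENNReal.ofReal b ≤ ENNReal.ofReal (a * c) * M := by
  rw [ENNReal.ofReal_mul (inv_nonneg.2 ha.le), ENNReal.ofReal_inv_of_pos ha,
    ENNReal.inv_mul_le_iff (by simpa using ha) ENNReal.ofReal_ne_top,
    ENNReal.ofReal_mul ha.le, mul_assoc]

section Morrey

variable {n : ℕ} {p : ℝ}

lemma le_morreyNorm (φ : EuclideanSpace ℝ (Fin n) → ℝ → ℝ) (g : EuclideanSpace ℝ (Fin n) → ℝ)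
    {x : EuclideanSpace ℝ (Fin n)} {r : ℝ} (hr : 0 < r) :
    ENNReal.ofReal ((φ x r)⁻¹ * LpB n p g x r) ≤ morreyNorm n p φ g :=
  le_iSup₂_of_le x r (le_iSup_of_le hr le_rfl)

lemma morreyNorm_le {φ : EuclideanSpace ℝ (Fin n) → ℝ → ℝ} {g : EuclideanSpace ℝ (Fin n) → ℝ}
    {c : ℝ≥0∞} (h : ∀ x r, 0 < r → ENNReal.ofReal ((φ x r)⁻¹ * LpB n p g x r) ≤ c) :
    morreyNorm n p φ g ≤ c :=
  iSup₂_le fun x r => iSup_le (h x r)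

lemma ofReal_LpB_le_mul_morreyNorm {φ : EuclideanSpace ℝ (Fin n) → ℝ → ℝ}
    (g : EuclideanSpace ℝ (Fin n) → ℝ) {x : EuclideanSpace ℝ (Fin n)} {r : ℝ} (hr : 0 < r)
    (hφ : 0 < φ x r) :
    ENNReal.ofReal (LpB n p g x r) ≤ ENNReal.ofReal (φ x r) * morreyNorm n p φ g := by
  simpa using (ENNReal.ofReal_inv_mul_le_iff (c := 1) hφ).1 (by simpa using le_morreyNorm φ g hr)

lemma lintegral_Ioi_log_kernel_mul_LpB_le {φ : EuclideanSpace ℝ (Fin n) → ℝ → ℝ}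
    (hφmeas : Measurable (Function.uncurry φ)) (hφpos : ∀ x r, 0 < r → 0 < φ x r)
    (g : EuclideanSpace ℝ (Fin n) → ℝ) (x : EuclideanSpace ℝ (Fin n)) {r ρ : ℝ} (hr : 0 < r)
    (hρ : r ≤ ρ) (a : ℝ) :
    ∫⁻ t in Ioi ρ, ENNReal.ofReal ((1 + Real.log (t / r)) * t ^ a * LpB n p g x t) ≤
      (∫⁻ t in Ioi r, ENNReal.ofReal ((1 + Real.log (t / r)) * φ x t * t ^ a)) *
        morreyNorm n p φ g := by
  have hmeas : Measurable fun t => ENNReal.ofReal ((1 + Real.log (t / r)) * φ x t * t ^ a) := by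
    have := hφmeas.of_uncurry_left (x := x)
    fun_prop
  calc ∫⁻ t in Ioi ρ, ENNReal.ofReal ((1 + Real.log (t / r)) * t ^ a * LpB n p g x t)
      ≤ ∫⁻ t in Ioi ρ, ENNReal.ofReal ((1 + Real.log (t / r)) * φ x t * t ^ a) *
          morreyNorm n p φ g := by
        refine setLIntegral_mono' measurableSet_Ioi fun t (ht : ρ < t) => ?_
        have ht0 : 0 < t := hr.trans_le hρ |>.trans ht
        have hkernel : 0 ≤ (1 + Real.log (t / r)) * t ^ a :=
          mul_nonneg (by linarith [Real.log_nonneg ((one_le_div hr).2 (hρ.trans ht.le))])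
            (Real.rpow_nonneg ht0.le a)
        rw [ENNReal.ofReal_mul hkernel, mul_right_comm _ (φ x t), ENNReal.ofReal_mul hkernel,
          mul_assoc]
        gcongr
        exact ofReal_LpB_le_mul_morreyNorm g ht0 (hφpos x t ht0)
    _ = (∫⁻ t in Ioi ρ, ENNReal.ofReal ((1 + Real.log (t / r)) * φ x t * t ^ a)) *
          morreyNorm n p φ g := lintegral_mul_const _ hmeas
    _ ≤ _ := by gcongr

end Morrey

theorem morrey_bound_from_local_estimate_general (n : ℕ) (p : ℝ)
    (φ₁ φ₂ : EuclideanSpace ℝ (Fin n) → ℝ → ℝ)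
    (hφ₁meas : Measurable (Function.uncurry φ₁))
    (hφ₁pos : ∀ x r, 0 < r → 0 < φ₁ x r) (hφ₂pos : ∀ x r, 0 < r → 0 < φ₂ x r)
    (C₀ : ℝ)
    (hC₀ : ∀ (x : EuclideanSpace ℝ (Fin n)) (r : ℝ), 0 < r →
      (∫⁻ t in Ioi r, ENNReal.ofReal ((1 + Real.log (t / r)) * φ₁ x t *
        t ^ (-(n : ℝ) / p - 1))) ≤ ENNReal.ofReal (C₀ * φ₂ x r * r ^ (-(n : ℝ) / p)))
    (f : EuclideanSpace ℝ (Fin n) → ℝ)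
    (F : EuclideanSpace ℝ (Fin n) → ℝ)
    (A : ℝ) (hA : 0 ≤ A)
    (hF : ∀ (x : EuclideanSpace ℝ (Fin n)) (r : ℝ), 0 < r →
      ENNReal.ofReal (LpB n p F x r) ≤
        ENNReal.ofReal (A * r ^ ((n : ℝ) / p)) *
          ∫⁻ t in Ioi (2 * r), ENNReal.ofReal ((1 + Real.log (t / r)) *
            t ^ (-(n : ℝ) / p - 1) * LpB n p f x t)) :
    morreyNorm n p φ₂ F ≤ ENNReal.ofReal (A * C₀) * morreyNorm n p φ₁ f := by
  refine morreyNorm_le fun x r hr => ?_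
  rw [ENNReal.ofReal_inv_mul_le_iff (hφ₂pos x r hr)]
  have hr_pow : r ^ ((n : ℝ) / p) * r ^ (-(n : ℝ) / p) = 1 := by
    rw [neg_div, Real.rpow_neg hr.le, mul_inv_cancel₀ (Real.rpow_pos_of_pos hr _).ne']
  calc ENNReal.ofReal (LpB n p F x r)
      ≤ ENNReal.ofReal (A * r ^ ((n : ℝ) / p)) *
          ((∫⁻ t in Ioi r, ENNReal.ofReal ((1 + Real.log (t / r)) * φ₁ x t *
            t ^ (-(n : ℝ) / p - 1))) * morreyNorm n p φ₁ f) := by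
        grw [hF x r hr, lintegral_Ioi_log_kernel_mul_LpB_le hφ₁meas hφ₁pos f x hr (by linarith)]
    _ ≤ ENNReal.ofReal (A * r ^ ((n : ℝ) / p)) *
          (ENNReal.ofReal (C₀ * φ₂ x r * r ^ (-(n : ℝ) / p)) * morreyNorm n p φ₁ f) := by
        grw [hC₀ x r hr]
    _ = ENNReal.ofReal (φ₂ x r * (A * C₀)) * morreyNorm n p φ₁ f := by
        rw [← mul_assoc, ← ENNReal.ofReal_mul (mul_nonneg hA (Real.rpow_nonneg hr.le _))]
        congr 2
        linear_combination (A * C₀ * φ₂ x r) * hr_pow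

theorem morrey_bound_from_local_estimate (n : ℕ) (hn : 1 ≤ n) (p : ℝ) (hp : 1 < p)
    (φ₁ φ₂ : EuclideanSpace ℝ (Fin n) → ℝ → ℝ)
    (hφ₁meas : Measurable (Function.uncurry φ₁)) (hφ₂meas : Measurable (Function.uncurry φ₂))
    (hφ₁pos : ∀ x r, 0 < r → 0 < φ₁ x r) (hφ₂pos : ∀ x r, 0 < r → 0 < φ₂ x r)
    (C₀ : ℝ)
    (hC₀ : ∀ (x : EuclideanSpace ℝ (Fin n)) (r : ℝ), 0 < r →
      (∫⁻ t in Ioi r, ENNReal.ofReal ((1 + Real.log (t / r)) * φ₁ x t *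
        t ^ (-(n : ℝ) / p - 1))) ≤ ENNReal.ofReal (C₀ * φ₂ x r * r ^ (-(n : ℝ) / p)))
    (f : EuclideanSpace ℝ (Fin n) → ℝ)
    (hf : ∀ (x : EuclideanSpace ℝ (Fin n)) (t : ℝ), 0 < t →
      MemLp f (ENNReal.ofReal p) (volume.restrict (ball x t)))
    (F : EuclideanSpace ℝ (Fin n) → ℝ) (hFmeas : Measurable F)
    (A : ℝ) (hA : 0 ≤ A)
    (hF : ∀ (x : EuclideanSpace ℝ (Fin n)) (r : ℝ), 0 < r →
      ENNReal.ofReal (LpB n p F x r) ≤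
        ENNReal.ofReal (A * r ^ ((n : ℝ) / p)) *
          ∫⁻ t in Ioi (2 * r), ENNReal.ofReal ((1 + Real.log (t / r)) *
            t ^ (-(n : ℝ) / p - 1) * LpB n p f x t)) :
    morreyNorm n p φ₂ F ≤ ENNReal.ofReal (A * C₀) * morreyNorm n p φ₁ f :=
  morrey_bound_from_local_estimate_general n p φ₁ φ₂ hφ₁meas hφ₁pos hφ₂pos C₀ hC₀ f F A hA hF
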